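/- arXiv:1707.08739 — 4 statements merged into one kernel-verified Lean document; each statement's English description precedes it below -/
import Mathlib

section
/- If for each player i the restriction set Δ_i equals the set of all CPSs on opponents' strategies, then Selective Rationalizability coincides with the rationalizable set: S_{i,RΔ}^n = S_i^∞ for every i and every n ≥ 0. -/
/-- An abstract finite dynamic game with perfect recall: a finite set of
players, for each player a finite set of strategies, an abstract type of
conditional probability systems (CPSs) over the opponents' strategies, a
sequential-best-reply correspondence `ρ`, and a strong-belief relation
`SB i μ j X` saying that the CPS `μ` of player `i` strongly believes the
set `X` of strategies of opponent `j`. -/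
structure Game where
  I : Type
  [fintypeI : Fintype I]
  [decEqI : DecidableEq I]
  S : I → Type
  [fintypeS : ∀ i, Fintype (S i)]
  CPS : I → Type
  ρ : ∀ i, CPS i → Set (S i)
  SB : ∀ i, CPS i → ∀ j, Set (S j) → Prop

attribute [instance] Game.fintypeI Game.decEqI Game.fintypeS

namespace Game

variable (G : Game)

/-- The Rationalizability procedure: `Rat 0 i = S_i`, and
`s_i ∈ Rat (n+1) i` iff `s_i` is a sequential best reply to some CPS `μ_i`
that strongly believes `Rat q j` for every opponent `j` and every `q < n+1`. -/
def Rat : ℕ → ∀ i : G.I, Set (G.S i)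
  | 0 => fun _ => Set.univ
  | n + 1 => fun i =>
      { s | ∃ μ : G.CPS i, s ∈ G.ρ i μ ∧
          ∀ j, j ≠ i → ∀ q, q < n + 1 → G.SB i μ j (Rat q j) }

/-- The set of rationalizable strategies of player `i`: `S_i^∞ = ⋂_n S_i^n`. -/
def RatInf (i : G.I) : Set (G.S i) := ⋂ n : ℕ, G.Rat n i

/-- Selective Rationalizability for a profile of belief restrictions
`Δ = (Δ_i)_{i∈I}`: `SelRat Δ 0 i = S_i^∞`, and `s_i ∈ SelRat Δ (n+1) i` iff
there is `μ_i ∈ Δ_i` such that (S1) `s_i ∈ ρ(μ_i)`, (S2) `μ_i` strongly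
believes `SelRat Δ q j` for all `j ≠ i` and `q < n+1`, and (S3) `μ_i`
strongly believes `Rat q j` for all `j ≠ i` and all `q ∈ ℕ`. -/
def SelRat (Δ : ∀ i : G.I, Set (G.CPS i)) : ℕ → ∀ i : G.I, Set (G.S i)
  | 0 => fun i => G.RatInf i
  | n + 1 => fun i =>
      { s | ∃ μ ∈ Δ i, s ∈ G.ρ i μ ∧
          (∀ j, j ≠ i → ∀ q, q < n + 1 → G.SB i μ j (SelRat Δ q j)) ∧
          (∀ j, j ≠ i → ∀ q : ℕ, G.SB i μ j (G.Rat q j)) }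

end Game

section Aux

open Classical

variable (G : Game)

lemma rat_succ_subset (n : ℕ) (i : G.I) : G.Rat (n + 1) i ⊆ G.Rat n i := by
  cases n with
  | zero => intro s _; simp only [Game.Rat]; trivial
  | succ m =>
    intro s hs
    simp only [Game.Rat, Set.mem_setOf_eq] at hs ⊢
    obtain ⟨μ, h1, h2⟩ := hs
    exact ⟨μ, h1, fun j hj q hq => h2 j hj q (hq.trans (Nat.lt_succ_self _))⟩

lemma rat_antitone {m n : ℕ} (h : m ≤ n) (i : G.I) : G.Rat n i ⊆ G.Rat m i := by
  induction n with
  | zero => simp_all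
  | succ k ih =>
    rcases Nat.lt_or_ge m (k + 1) with h' | h'
    · exact (rat_succ_subset G k i).trans (ih (Nat.lt_succ_iff.mp h'))
    · have : m = k + 1 := le_antisymm h h'
      subst this; exact subset_rfl

noncomputable def cardFun (n : ℕ) : ℕ :=
  Finset.univ.sum fun j : G.I => (G.Rat n j).ncard

lemma cardFun_antitone : Antitone (cardFun G) := by
  intro m n h
  refine Finset.sum_le_sum fun j _ => ?_
  exact Set.ncard_le_ncard (rat_antitone G h j) (Set.toFinite _)

lemma rat_stab : ∃ N : ℕ, ∀ m, N ≤ m → ∀ j, G.Rat m j = G.Rat N j := by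
  have hne : (Set.range (cardFun G)).Nonempty := ⟨_, ⟨0, rfl⟩⟩
  obtain ⟨N, hN⟩ : ∃ N, cardFun G N = sInf (Set.range (cardFun G)) :=
    (Nat.sInf_mem hne : sInf _ ∈ Set.range _)
  refine ⟨N, fun m hm j => ?_⟩
  have hle : cardFun G m ≤ cardFun G N := cardFun_antitone G hm
  have hge : cardFun G N ≤ cardFun G m := hN ▸ Nat.sInf_le ⟨m, rfl⟩
  have hsum : cardFun G m = cardFun G N := le_antisymm hle hge
  have hall : ∀ k : G.I, (G.Rat m k).ncard = (G.Rat N k).ncard := by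
    by_contra hc
    push_neg at hc
    obtain ⟨k, hk⟩ := hc
    have hklt : (G.Rat m k).ncard < (G.Rat N k).ncard :=
      lt_of_le_of_ne (Set.ncard_le_ncard (rat_antitone G hm k) (Set.toFinite _)) hk
    have : cardFun G m < cardFun G N := by
      unfold cardFun
      refine Finset.sum_lt_sum (fun j _ => ?_) ⟨k, Finset.mem_univ k, hklt⟩
      exact Set.ncard_le_ncard (rat_antitone G hm j) (Set.toFinite _)
    omega
  exact Set.eq_of_subset_of_ncard_le (rat_antitone G hm j)
    ((hall j).ge) (Set.toFinite _)

lemma ratInf_eq_stab {N : ℕ} (hN : ∀ m, N ≤ m → ∀ j, G.Rat m j = G.Rat N j)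
    (j : G.I) : G.RatInf j = G.Rat N j := by
  apply subset_antisymm
  · exact Set.iInter_subset _ N
  · intro s hs
    refine Set.mem_iInter.mpr fun m => ?_
    rcases Nat.lt_or_ge m N with h | h
    · exact rat_antitone G h.le j hs
    · rw [hN m h j]; exact hs

end Aux

/-- If for each player `i` the restriction set `Δ_i` equals the
set of all CPSs on opponents' strategies, then Selective Rationalizability
coincides with the rationalizable set: `S_{i,RΔ}^n = S_i^∞` for every `i`
and every `n ≥ 0`. -/
theorem selective_with_trivial_restrictions (G : Game) (i : G.I) (n : ℕ) :
    G.SelRat (fun _ => Set.univ) n i = G.RatInf i := by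
  obtain ⟨N, hN⟩ := rat_stab G
  induction n using Nat.strong_induction_on generalizing i with
  | _ n ih =>
    cases n with
    | zero => simp only [Game.SelRat]
    | succ n =>
      apply subset_antisymm
      · intro s hs
        simp only [Game.SelRat, Set.mem_setOf_eq] at hs
        obtain ⟨μ, -, hρ, -, hS3⟩ := hs
        refine Set.mem_iInter.mpr fun m => ?_
        cases m with
        | zero => simp only [Game.Rat]; trivial
        | succ m =>
          simp only [Game.Rat, Set.mem_setOf_eq]
          exact ⟨μ, hρ, fun j hj q _ => hS3 j hj q⟩
      · intro s hs
        have hsN : s ∈ G.Rat (N + 1) i := Set.mem_iInter.mp hs (N + 1)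
        simp only [Game.Rat, Set.mem_setOf_eq] at hsN
        obtain ⟨μ, hρ, hSB⟩ := hsN
        simp only [Game.SelRat, Set.mem_setOf_eq]
        refine ⟨μ, Set.mem_univ _, hρ, ?_, ?_⟩
        · intro j hj q hq
          rw [ih q hq j, ratInf_eq_stab G hN j]
          exact hSB j hj N (Nat.lt_succ_self N)
        · intro j hj q
          rcases Nat.lt_or_ge q (N + 1) with h | h
          · exact hSB j hj q h
          · rw [hN q (Nat.le_of_succ_le h) j]
            exact hSB j hj N (Nat.lt_succ_self N)
end

section
/- The strong belief operator is not monotonic: there exist a two-player finite dynamic game, a player i, and events E, F over opponent strategy-type pairs with E ⊆ F such that the strong belief event SB_i(E) is not a subset of SB_i(F). -/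
open scoped ENNReal

/-- A (two-player) finite dynamic game together with an epistemic type
structure: for each player `i`, a finite strategy set `S i`, a finite set of
information sets `H i`, a type space `T i`, a reachability correspondence
`reach i j h = S_j(h)` (the strategies of player `j` allowing `h ∈ H_i` to
be reached), and a belief map `g` assigning to each type of `i` and each
information set of `i` a probability measure (a `PMF`) over profiles of
opponents' strategy-type pairs (the conditionals of a CPS). -/
structure TwoPlayerTS where
  S : Fin 2 → Type
  [fS : ∀ i, Fintype (S i)]
  T : Fin 2 → Type
  H : Fin 2 → Type
  [fH : ∀ i, Fintype (H i)]
  reach : ∀ i j : Fin 2, H i → Set (S j)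
  g : ∀ i : Fin 2, T i → H i → PMF (∀ j : Fin 2, S j × T j)

attribute [instance] TwoPlayerTS.fS TwoPlayerTS.fH

namespace TwoPlayerTS

variable (G : TwoPlayerTS)

/-- The belief event `B_{i,h}(E)`: the set of strategy-type pairs of player
`i` whose type, at information set `h`, assigns probability one to the event
`E ⊆ Ω_j = S_j × T_j` about opponent `j` (probability one of a `PMF` on a
set means the support is contained in it). -/
def Bev (i j : Fin 2) (h : G.H i) (E : Set (G.S j × G.T j)) :
    Set (G.S i × G.T i) :=
  { p | ∀ ω ∈ (G.g i p.2 h).support, ω j ∈ E }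

/-- The strong belief event `SB_i(E)`: player `i` believes `E` at every
information set `h ∈ H_i` at which `E` is not contradicted, i.e. such that
`Proj_{S_j} E ∩ S_j(h) ≠ ∅`. -/
def SBev (i j : Fin 2) (E : Set (G.S j × G.T j)) : Set (G.S i × G.T i) :=
  ⋂ h ∈ { h : G.H i | (Prod.fst '' E ∩ G.reach i j h).Nonempty },
    G.Bev i j h E

end TwoPlayerTS

namespace TwoPlayerTS

variable (G : TwoPlayerTS)

theorem mem_SBev_iff {i j : Fin 2} {E : Set (G.S j × G.T j)} {p : G.S i × G.T i} :
    p ∈ G.SBev i j E ↔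
      ∀ h, (Prod.fst '' E ∩ G.reach i j h).Nonempty → p ∈ G.Bev i j h E :=
  Set.mem_iInter₂

theorem mem_Bev_iff_of_g_eq_pure {i j : Fin 2} {h : G.H i} {E : Set (G.S j × G.T j)}
    {p : G.S i × G.T i} {ω : ∀ k, G.S k × G.T k} (hg : G.g i p.2 h = PMF.pure ω) :
    p ∈ G.Bev i j h E ↔ ω j ∈ E := by
  simp [Bev, hg]

end TwoPlayerTS

open TwoPlayerTS

/-- Each player has strategies `0, 1, 2` and two information sets: `true`, reached only
if the opponent plays `0`, and `false`, reached only if the opponent plays `1`. Every type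
is certain of `0` at `true` and, surprised at `false`, becomes certain of `2` there.
Such a type strongly believes `{0}`, which leaves `false` unconstrained, but not `{0, 1}`:
enlarging the event makes `false` consistent with it and so demands belief there too. -/
noncomputable def surpriseGame : TwoPlayerTS where
  S _ := Fin 3
  T _ := Unit
  H _ := Bool
  reach _ _ h := if h then {0} else {1}
  g _ _ h := PMF.pure fun _ => (if h then 0 else 2, ())

theorem surpriseGame_mem_SBev_singleton_zero :
    ((0 : Fin 3), ()) ∈ surpriseGame.SBev 0 1 {((0 : Fin 3), ())} := by
  refine (mem_SBev_iff _).mpr ?_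
  rintro (_ | _) hconsistent
  · obtain ⟨_, ⟨_, rfl, rfl⟩, hreached⟩ := hconsistent
    exact absurd hreached (by decide : (0 : Fin 3) ≠ 1)
  · exact (mem_Bev_iff_of_g_eq_pure _ rfl).mpr rfl

theorem surpriseGame_notMem_SBev_pair (p : surpriseGame.S 0 × surpriseGame.T 0) :
    p ∉ surpriseGame.SBev 0 1 {((1 : Fin 3), ()), ((0 : Fin 3), ())} := by
  intro hsb
  replace hsb := (mem_SBev_iff _).mp hsb
  have hreached : (Prod.fst '' {((1 : Fin 3), ()), ((0 : Fin 3), ())} ∩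
      surpriseGame.reach 0 1 false).Nonempty :=
    ⟨1, ⟨((1 : Fin 3), ()), Set.mem_insert _ _, rfl⟩, rfl⟩
  have hbelief : ((2 : Fin 3), ()) = (1, ()) ∨ ((2 : Fin 3), ()) = (0, ()) :=
    (mem_Bev_iff_of_g_eq_pure _ rfl).mp (hsb false hreached)
  simp at hbelief

/-- The strong belief operator is not monotonic: there exist a
two-player finite dynamic game (with a type structure), a player `i` (with
opponent `j`), and events `E ⊆ F` over the opponent's strategy-type pairs
such that `SB_i(E)` is not a subset of `SB_i(F)`. -/
theorem strong_belief_not_monotone :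
    ∃ (G : TwoPlayerTS) (i j : Fin 2) (_ : j ≠ i)
      (E F : Set (G.S j × G.T j)),
      E ⊆ F ∧ ¬ G.SBev i j E ⊆ G.SBev i j F :=
  ⟨surpriseGame, 0, 1, by decide, _, _, Set.subset_insert _ _,
    fun hsub => surpriseGame_notMem_SBev_pair _ (hsub surpriseGame_mem_SBev_singleton_zero)⟩
end

section
/- For any CPS μ_i of player i and any subsets S̄_j ⊆ S_j (j ≠ i): if μ_i strongly believes each S̄_j, and h ∈ H_i is an information set not reachable by S̄_{-i} = ×_{j≠i} S̄_j whose immediate predecessor p(h) ∈ H_i is reachable by S̄_{-i}, then μ_i(S_{-i}(h) | p(h)) = 0. -/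
open Finset

/-- The collection of conditioning events of player `i`'s conditional
probability systems in a finite dynamic game: opponents are indexed by a
finite type `J`, each opponent `j` has a finite strategy set `Sj j`, the
state space is the set of opponents' strategy profiles `∀ j, Sj j`, player
`i` has a finite set `H` of information sets, and `cond h = S_{-i}(h)` is
the set of opponents' profiles allowing `h` to be reached. -/
structure CPSFrame where
  J : Type
  [fJ : Fintype J]
  Sj : J → Type
  [fS : ∀ j, Fintype (Sj j)]
  [dS : ∀ j, DecidableEq (Sj j)]
  H : Type
  [fH : Fintype H]
  cond : H → Finset (∀ j, Sj j)

attribute [instance] CPSFrame.fJ CPSFrame.fS CPSFrame.dS CPSFrame.fH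

namespace CPSFrame

variable (G : CPSFrame)

/-- The probability that `μ(·|h)` assigns to a set `E` of opponents'
strategy profiles. -/
def mass (μ : G.H → (∀ j, G.Sj j) → ℝ) (h : G.H) (E : Finset (∀ j, G.Sj j)) : ℝ :=
  ∑ x ∈ E, μ h x

/-- `μ` is a conditional probability system on
`(S_{-i}, (S_{-i}(h))_{h ∈ H_i})`: each `μ(·|h)` is a probability measure
concentrated on `S_{-i}(h)`, and the chain rule
`μ(E|h) = μ(E|h') · μ(S_{-i}(h')|h)` holds whenever
`E ⊆ S_{-i}(h') ⊆ S_{-i}(h)`. -/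
def IsCPS (μ : G.H → (∀ j, G.Sj j) → ℝ) : Prop :=
  (∀ h x, 0 ≤ μ h x) ∧
  (∀ h, G.mass μ h (G.cond h) = 1) ∧
  (∀ h x, x ∉ G.cond h → μ h x = 0) ∧
  (∀ h h' : G.H, G.cond h' ⊆ G.cond h →
    ∀ E : Finset (∀ j, G.Sj j), E ⊆ G.cond h' →
      G.mass μ h E = G.mass μ h' E * G.mass μ h (G.cond h'))

/-- `μ` strongly believes `S̄_j ⊆ S_j`: conditional on every information set
`h` with `S̄_j(h) ≠ ∅`, the event that `j` plays in `S̄_j` has probability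
one. -/
def StronglyBelieves (μ : G.H → (∀ j, G.Sj j) → ℝ) (j : G.J)
    (Sbar : Set (G.Sj j)) [DecidablePred (· ∈ Sbar)] : Prop :=
  ∀ h : G.H, (∃ x ∈ G.cond h, x j ∈ Sbar) →
    G.mass μ h {x ∈ G.cond h | x j ∈ Sbar} = 1

end CPSFrame

/-- For any CPS `μ_i` of player `i` and any subsets
`S̄_j ⊆ S_j` (`j ≠ i`): if `μ_i` strongly believes each `S̄_j`, and
`h ∈ H_i` is an information set not reachable by `S̄_{-i} = ×_{j≠i} S̄_j`
whose immediate predecessor `p(h) ∈ H_i` is reachable by `S̄_{-i}`, then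
`μ_i(S_{-i}(h) | p(h)) = 0`.  (Recall `S_{-i}(h) ⊆ S_{-i}(p(h))`, and `h`
is reachable by `S̄_{-i}` iff `S̄_{-i} ∩ S_{-i}(h) ≠ ∅`.) -/
theorem strong_belief_zero_mass_on_unreachable (G : CPSFrame)
    (μ : G.H → (∀ j, G.Sj j) → ℝ) (hμ : G.IsCPS μ)
    (Sbar : ∀ j : G.J, Set (G.Sj j))
    [∀ j, DecidablePred (· ∈ Sbar j)]
    (hSB : ∀ j : G.J, G.StronglyBelieves μ j (Sbar j))
    (h ph : G.H)
    (hsub : G.cond h ⊆ G.cond ph)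
    (hnot : ¬ ∃ x ∈ G.cond h, ∀ j, x j ∈ Sbar j)
    (hyes : ∃ x ∈ G.cond ph, ∀ j, x j ∈ Sbar j) :
    G.mass μ ph (G.cond h) = 0 := by
  obtain ⟨hnn, hone, -, -⟩ := hμ
  -- For each j the complement event has mass 0, hence pointwise μ = 0 there.
  have key : ∀ j : G.J, ∀ x ∈ G.cond ph, x j ∉ Sbar j → μ ph x = 0 := by
    intro j x hx hxj
    obtain ⟨y, hy, hyall⟩ := hyes
    have h1 : G.mass μ ph {z ∈ G.cond ph | z j ∈ Sbar j} = 1 :=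
      hSB j ph ⟨y, hy, hyall j⟩
    have hsubB : {z ∈ G.cond ph | z j ∈ Sbar j} ⊆ G.cond ph :=
      Finset.filter_subset _ _
    have hsplit := Finset.sum_sdiff (f := μ ph) hsubB
    have hzero : G.mass μ ph (G.cond ph \ {z ∈ G.cond ph | z j ∈ Sbar j}) = 0 := by
      have := hone ph
      unfold CPSFrame.mass at *
      linarith
    have hxmem : x ∈ G.cond ph \ {z ∈ G.cond ph | z j ∈ Sbar j} := by
      simp [hx, hxj]
    have := (Finset.sum_eq_zero_iff_of_nonneg (fun z _ => hnn ph z)).mp hzero x hxmem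
    exact this
  apply Finset.sum_eq_zero
  intro x hx
  have hxph : x ∈ G.cond ph := hsub hx
  by_cases hall : ∀ j, x j ∈ Sbar j
  · exact absurd ⟨x, hx, hall⟩ hnot
  · push_neg at hall
    obtain ⟨j, hj⟩ := hall
    exact key j x hxph hj
end

section
/- The rationality event has the completeness property: in a complete type structure, for every player i, every type t_i with (s̄_i,t_i) ∈ R_i for some s̄_i, every s_i ∈ ρ(f_i(t_i)), and every family of injections τ_j : Proj_{S_j}R_j → R_j (j ≠ i) with τ_j(s̄_j) of the form (s̄_j, t_j), there exists a type t_i' such that (s_i, t_i') ∈ R_i, f_i(t_i') = f_i(t_i), and for all h ∈ H_i, j ≠ i, and s_j ∈ Proj_{S_j}R_j, g_{i,h}(t_i')[τ_j(s_j) × Ω_{-i,j}] = f_{i,h}(t_i)[s_j × S_{-i,j}]. -/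
open scoped ENNReal

/-- The topology on `PMF α` induced from the product topology on
`α → ℝ≥0∞` (topology of pointwise, hence for finite `α` weak, convergence). -/
noncomputable instance PMF.instTopologicalSpace (α : Type*) :
    TopologicalSpace (PMF α) :=
  TopologicalSpace.induced (fun p a => p a) Pi.topologicalSpace

/-- A finite dynamic game with perfect recall together with an epistemic
type structure.  Player `i` has finite sets `H i` of information sets and
`A i` of actions, so strategies are functions `H i → A i`; `reach i j h =
S_j(h)` is the set of strategies of `j` allowing `h ∈ H_i` to be reached.
`T i` is the (compact metrizable) space of epistemic types of `i`, and
`g i t h` is the conditional belief (a `PMF`, representing the conditional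
of a CPS) of type `t` at `h ∈ H_i` over profiles of strategy-type pairs
(beliefs about the opponents' components are what matters).  `ρ` is the
sequential-best-reply correspondence on first-order CPSs `H i → PMF(S_{-i})`. -/
structure EGame where
  I : Type
  [fI : Fintype I]
  [dI : DecidableEq I]
  A : I → Type
  [fA : ∀ i, Fintype (A i)]
  [dA : ∀ i, DecidableEq (A i)]
  H : I → Type
  [fH : ∀ i, Fintype (H i)]
  [dH : ∀ i, DecidableEq (H i)]
  T : I → Type
  [topT : ∀ i, TopologicalSpace (T i)]
  [cptT : ∀ i, CompactSpace (T i)]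
  [metrT : ∀ i, TopologicalSpace.MetrizableSpace (T i)]
  reach : ∀ i j, H i → Set (H j → A j)
  g : ∀ i, T i → H i → PMF (∀ j, (H j → A j) × T j)
  ρ : ∀ i, (H i → PMF (∀ j, H j → A j)) → Set (H i → A i)

attribute [instance] EGame.fI EGame.dI EGame.fA EGame.dA EGame.fH EGame.dH
  EGame.topT EGame.cptT EGame.metrT

namespace EGame

variable (G : EGame)

/-- Strategies of player `i`. -/
abbrev Strat (i : G.I) : Type := G.H i → G.A i

/-- The state space `Ω_i = S_i × T_i` of player `i`. -/
abbrev Ω (i : G.I) : Type := G.Strat i × G.T i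

/-- First-order CPSs of player `i`: tuples of conditional beliefs over
strategy profiles (only opponents' coordinates matter). -/
abbrev FOB (i : G.I) : Type := G.H i → PMF (∀ j, G.Strat j)

/-- The first-order belief map `f_i`: the marginal of `g_i` on strategies. -/
noncomputable def f (i : G.I) (t : G.T i) : G.FOB i :=
  fun h => (G.g i t h).map (fun ω j => (ω j).1)

/-- The strategy cylinder `S_{-i}(h)`: profiles whose opponents'
coordinates allow `h ∈ H_i`. -/
def cyl (i : G.I) (h : G.H i) : Set (∀ j, G.Strat j) :=
  { x | ∀ j, j ≠ i → x j ∈ G.reach i j h }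

/-- The strategy-type cylinder `T_{-i} × S_{-i}(h)`. -/
def cyl2 (i : G.I) (h : G.H i) : Set (∀ j, G.Ω j) :=
  { ω | ∀ j, j ≠ i → (ω j).1 ∈ G.reach i j h }

/-- `μ` is a first-order CPS of `i` on `(S_{-i}, (S_{-i}(h))_{h∈H_i})`:
each conditional is concentrated on the corresponding cylinder and the
chain rule holds. -/
def isCPS1 (i : G.I) (μ : G.FOB i) : Prop :=
  (∀ h, (μ h).toOuterMeasure (G.cyl i h) = 1) ∧
  (∀ h h' : G.H i, G.cyl i h' ⊆ G.cyl i h →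
    ∀ E : Set (∀ j, G.Strat j), E ⊆ G.cyl i h' →
      (μ h).toOuterMeasure E =
        (μ h').toOuterMeasure E * (μ h).toOuterMeasure (G.cyl i h'))

/-- `ν` is a second-order CPS of `i` on
`(Ω_{-i}, (T_{-i} × S_{-i}(h))_{h∈H_i})`. -/
def isCPS2 (i : G.I) (ν : G.H i → PMF (∀ j, G.Ω j)) : Prop :=
  (∀ h, (ν h).toOuterMeasure (G.cyl2 i h) = 1) ∧
  (∀ h h' : G.H i, G.cyl2 i h' ⊆ G.cyl2 i h →
    ∀ E : Set (∀ j, G.Ω j), E ⊆ G.cyl2 i h' →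
      (ν h).toOuterMeasure E =
        (ν h').toOuterMeasure E * (ν h).toOuterMeasure (G.cyl2 i h'))

/-- `μ` strongly believes the set `X` of strategies of opponent `j`:
probability one on `X` at every `h ∈ H_i` with `X ∩ S_j(h) ≠ ∅`. -/
def SBs (i : G.I) (μ : G.FOB i) (j : G.I) (X : Set (G.Strat j)) : Prop :=
  ∀ h : G.H i, (X ∩ G.reach i j h).Nonempty →
    ∀ x ∈ (μ h).support, x j ∈ X

/-- The Rationalizability procedure. -/
def Rat : ℕ → ∀ i : G.I, Set (G.Strat i)
  | 0 => fun _ => Set.univ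
  | n + 1 => fun i =>
      { s | ∃ μ : G.FOB i, G.isCPS1 i μ ∧ s ∈ G.ρ i μ ∧
          ∀ j, j ≠ i → ∀ q, q < n + 1 → G.SBs i μ j (Rat q j) }

/-- The rationalizable strategies `S_i^∞`. -/
def RatInf (i : G.I) : Set (G.Strat i) := ⋂ n : ℕ, G.Rat n i

/-- Selective Rationalizability for restrictions `Δ` (conditions S1, S2,
S3). -/
def SelRat (Δ : ∀ i : G.I, Set (G.FOB i)) : ℕ → ∀ i : G.I, Set (G.Strat i)
  | 0 => fun i => G.RatInf i
  | n + 1 => fun i =>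
      { s | ∃ μ ∈ Δ i, G.isCPS1 i μ ∧ s ∈ G.ρ i μ ∧
          (∀ j, j ≠ i → ∀ q, q < n + 1 → G.SBs i μ j (SelRat Δ q j)) ∧
          (∀ j, j ≠ i → ∀ q : ℕ, G.SBs i μ j (G.Rat q j)) }

/-- The limit `S_{i,RΔ}^∞` of Selective Rationalizability. -/
def SelRatInf (Δ : ∀ i : G.I, Set (G.FOB i)) (i : G.I) : Set (G.Strat i) :=
  ⋂ n : ℕ, G.SelRat Δ n i

/-- The rationality event `R_i = {(s_i,t_i) : s_i ∈ ρ(f_i(t_i))}`. -/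
def Rev (i : G.I) : Set (G.Ω i) := { p | p.1 ∈ G.ρ i (G.f i p.2) }

/-- The event `[Δ_i]` where the first-order beliefs of `i` lie in `Δ_i`. -/
def DelEv (Δ : ∀ i : G.I, Set (G.FOB i)) (i : G.I) : Set (G.Ω i) :=
  { p | G.f i p.2 ∈ Δ i }

/-- The independent strong-belief event `SB_i(E_{-i})`: for each opponent
`j`, type `t_i` assigns, at every `h ∈ H_i` with
`Proj_{S_j} E_j ∩ S_j(h) ≠ ∅`, probability one to `E_j × Ω_{-i,j}`. -/
def SBe (E : ∀ j : G.I, Set (G.Ω j)) (i : G.I) : Set (G.Ω i) :=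
  { p | ∀ j, j ≠ i → ∀ h : G.H i,
      ((Prod.fst '' E j) ∩ G.reach i j h).Nonempty →
        ∀ ω ∈ (G.g i p.2 h).support, ω j ∈ E j }

/-- Correct mutual independent strong belief,
`CSB(E)_i = E_i ∩ SB_i(E_{-i})`. -/
def CSB (E : ∀ j : G.I, Set (G.Ω j)) (i : G.I) : Set (G.Ω i) :=
  E i ∩ G.SBe E i

/-- The iterates `CSB^n(E)` (componentwise). -/
def CSBiter (E : ∀ j : G.I, Set (G.Ω j)) : ℕ → ∀ j : G.I, Set (G.Ω j)
  | 0 => E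
  | n + 1 => G.CSB (CSBiter E n)

/-- `CSB^∞(E) = ∩_{n≥0} CSB^n(E)` (componentwise). -/
def CSBinf (E : ∀ j : G.I, Set (G.Ω j)) (i : G.I) : Set (G.Ω i) :=
  ⋂ n : ℕ, G.CSBiter E n i

/-- The `S`-projection of a Cartesian event: the strategy profiles
appearing in it. -/
def ProjS (E : ∀ j : G.I, Set (G.Ω j)) : Set (∀ j, G.Strat j) :=
  { s | ∀ i, ∃ t : G.T i, (s i, t) ∈ E i }

/-- The set of strategy profiles with all components in the given sets. -/
def Profiles (X : ∀ i : G.I, Set (G.Strat i)) : Set (∀ i, G.Strat i) :=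
  { s | ∀ i, s i ∈ X i }

/-- The completeness property of a Cartesian event `E` (Battigalli–
Prestipino): for every `i`, every type `t_i` appearing in `E_i`, every
`s_i ∈ ρ(f_i(t_i))`, and every strategy-preserving selection
`τ_j : Proj_{S_j}E_j → E_j` for the opponents, there is a type `t_i'` with
`(s_i,t_i') ∈ E_i`, the same first-order beliefs as `t_i`, and second-order
beliefs putting on each `τ_j(s_j)` the mass that `f_i(t_i)` puts on `s_j`. -/
def CompProp (E : ∀ j : G.I, Set (G.Ω j)) : Prop :=
  ∀ (i : G.I) (t : G.T i), (∃ s, (s, t) ∈ E i) →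
    ∀ s ∈ G.ρ i (G.f i t), ∀ τ : ∀ j, G.Strat j → G.T j,
      (∀ j, j ≠ i → ∀ sj ∈ Prod.fst '' E j, (sj, τ j sj) ∈ E j) →
      ∃ t' : G.T i, (s, t') ∈ E i ∧ G.f i t' = G.f i t ∧
        ∀ (h : G.H i) (j : G.I), j ≠ i → ∀ sj ∈ Prod.fst '' E j,
          (G.g i t' h).toOuterMeasure { ω | ω j = (sj, τ j sj) } =
            (G.f i t h).toOuterMeasure { x | x j = sj }

end EGame

/-- The rationality event has the completeness property: in a
complete (onto `g`) type structure, for every player `i`, every type `t_i`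
with `(s̄_i,t_i) ∈ R_i` for some `s̄_i`, every `s_i ∈ ρ(f_i(t_i))`, and
every family of strategy-preserving selections `τ_j : Proj_{S_j}R_j → R_j`
(`j ≠ i`), there exists a type `t_i'` such that `(s_i,t_i') ∈ R_i`,
`f_i(t_i') = f_i(t_i)`, and for all `h ∈ H_i`, `j ≠ i`, and
`s_j ∈ Proj_{S_j}R_j`,
`g_{i,h}(t_i')[τ_j(s_j) × Ω_{-i,j}] = f_{i,h}(t_i)[s_j × S_{-i,j}]`. -/
theorem rationality_event_completeness (G : EGame)
    (hgCPS : ∀ (i : G.I) (t : G.T i), G.isCPS2 i (G.g i t))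
    (hgOnto : ∀ (i : G.I) (ν : G.H i → PMF (∀ j, G.Ω j)),
      G.isCPS2 i ν → ∃ t : G.T i, G.g i t = ν) :
    G.CompProp (fun i => G.Rev i) := by
  intro i t _ht s hs τ _hτ
  classical
  set μ : G.FOB i := G.f i t with hμdef
  obtain ⟨hg1, hg2⟩ := hgCPS i t
  -- projection map
  set p : (∀ j, G.Ω j) → (∀ j, G.Strat j) := fun ω j => (ω j).1 with hpdef
  have hp : ∀ h, p ⁻¹' G.cyl i h = G.cyl2 i h := by
    intro h; rfl
  -- f i t is a first-order CPS
  have hf1 : G.isCPS1 i μ := by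
    constructor
    · intro h
      show ((G.g i t h).map p).toOuterMeasure (G.cyl i h) = 1
      rw [PMF.toOuterMeasure_map_apply, hp]
      exact hg1 h
    · intro h h' hsub E hE
      show ((G.g i t h).map p).toOuterMeasure E =
        ((G.g i t h').map p).toOuterMeasure E *
          ((G.g i t h).map p).toOuterMeasure (G.cyl i h')
      rw [PMF.toOuterMeasure_map_apply, PMF.toOuterMeasure_map_apply,
        PMF.toOuterMeasure_map_apply, hp]
      exact hg2 h h' (by rw [← hp, ← hp]; exact Set.preimage_mono hsub)
        (p ⁻¹' E) (by rw [← hp]; exact Set.preimage_mono hE)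
  -- the lifting map
  set m : (∀ j, G.Strat j) → (∀ j, G.Ω j) := fun x j => (x j, τ j (x j)) with hmdef
  have hm : ∀ h, m ⁻¹' G.cyl2 i h = G.cyl i h := by
    intro h; rfl
  set ν : G.H i → PMF (∀ j, G.Ω j) := fun h => (μ h).map m with hνdef
  have hν : G.isCPS2 i ν := by
    constructor
    · intro h
      show ((μ h).map m).toOuterMeasure (G.cyl2 i h) = 1
      rw [PMF.toOuterMeasure_map_apply, hm]
      exact hf1.1 h
    · intro h h' hsub E hE
      show ((μ h).map m).toOuterMeasure E =
        ((μ h').map m).toOuterMeasure E *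
          ((μ h).map m).toOuterMeasure (G.cyl2 i h')
      rw [PMF.toOuterMeasure_map_apply, PMF.toOuterMeasure_map_apply,
        PMF.toOuterMeasure_map_apply, hm]
      have hsub' : G.cyl i h' ⊆ G.cyl i h := by
        intro x hx
        have : m x ∈ G.cyl2 i h' := by rw [← hm h'] at hx; exact hx
        have := hsub this
        rw [← hm h]; exact this
      exact hf1.2 h h' hsub' (m ⁻¹' E)
        (by rw [← hm h']; exact Set.preimage_mono hE)
  obtain ⟨t', hgt'⟩ := hgOnto i ν hν
  have hpm : p ∘ m = id := by
    funext x; rfl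
  have hf' : G.f i t' = G.f i t := by
    funext h
    show (G.g i t' h).map p = μ h
    rw [hgt']
    show ((μ h).map m).map p = μ h
    rw [PMF.map_comp, hpm, PMF.map_id]
  refine ⟨t', ?_, hf', ?_⟩
  · show s ∈ G.ρ i (G.f i t')
    rw [hf']; exact hs
  · intro h j hj sj _hsj
    rw [hgt']
    show ((μ h).map m).toOuterMeasure _ = (μ h).toOuterMeasure _
    rw [PMF.toOuterMeasure_map_apply]
    congr 1
    ext x
    simp only [Set.mem_preimage, Set.mem_setOf_eq, hmdef, Prod.mk.injEq]
    exact ⟨fun ⟨h1, _⟩ => h1, fun h1 => ⟨h1, by rw [h1]⟩⟩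
end
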